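/- Let M be a deterministic program with high-security input H, low-security input L, and low-security output O, and let μ be a probability distribution on ℍ × 𝕃 with μ(h,ℓ) > 0 for all h ∈ ℍ and ℓ ∈ 𝕃. Then M is non-interferent if and only if SE[μ](M) ≤ 0. -/

import Mathlib

/-!
Statement 0: For a deterministic program `M : ℍ × 𝕃 → 𝕆` and a probability
distribution `μ` on `ℍ × 𝕃` with `μ(h,ℓ) > 0` everywhere, `M` is non-interferent
iff `SE[μ](M) ≤ 0`, where `SE[μ](M) = 𝓗[μ](H|L) − 𝓗[μ](H|O,L)`.
-/

/-- `p · log₂(1/p)`, one summand of the Shannon entropy. -/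
noncomputable def entTerm (p : ℝ) : ℝ := p * Real.logb 2 (1 / p)

variable {Hi Li Oi : Type*}

/-- Marginal probability `μ(L = ℓ)`. -/
noncomputable def pL [Fintype Hi] (μ : Hi × Li → ℝ) (ℓ : Li) : ℝ := ∑ h, μ (h, ℓ)

/-- Joint probability `μ(O = o, L = ℓ)` where `O = M(H,L)`. -/
noncomputable def pOL [Fintype Hi] [DecidableEq Oi] (M : Hi × Li → Oi) (μ : Hi × Li → ℝ)
    (o : Oi) (ℓ : Li) : ℝ := ∑ h, if M (h, ℓ) = o then μ (h, ℓ) else 0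

/-- Conditional Shannon entropy `𝓗[μ](H|L) = Σ_ℓ μ(L=ℓ) · 𝓗[μ](H|L=ℓ)`. -/
noncomputable def condEntHL [Fintype Hi] [Fintype Li] (μ : Hi × Li → ℝ) : ℝ :=
  ∑ ℓ : Li, pL μ ℓ * ∑ h : Hi, entTerm (μ (h, ℓ) / pL μ ℓ)

/-- Conditional Shannon entropy `𝓗[μ](H|O,L)` where `O = M(H,L)`. -/
noncomputable def condEntHOL [Fintype Hi] [Fintype Li] [Fintype Oi] [DecidableEq Oi]
    (M : Hi × Li → Oi) (μ : Hi × Li → ℝ) : ℝ :=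
  ∑ ℓ : Li, ∑ o : Oi,
    pOL M μ o ℓ * ∑ h : Hi, entTerm ((if M (h, ℓ) = o then μ (h, ℓ) else 0) / pOL M μ o ℓ)

/-- Shannon-entropy-based quantitative information flow
`SE[μ](M) = 𝓗[μ](H|L) − 𝓗[μ](H|O,L)`. -/
noncomputable def SE [Fintype Hi] [Fintype Li] [Fintype Oi] [DecidableEq Oi]
    (M : Hi × Li → Oi) (μ : Hi × Li → ℝ) : ℝ :=
  condEntHL μ - condEntHOL M μ

/-! Since `O = M(H,L)` is a function of `(H,L)`, the chain rule gives
`𝓗(H|L) = 𝓗(H|O,L) + 𝓗(O|L)`, so `SE[μ](M) = 𝓗(O|L)`. This conditional entropy vanishes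
iff for every `ℓ` the law of `O` given `L = ℓ` is a point mass, and since `μ` charges every
input, the support of that law is exactly the range of `M(·,ℓ)`. -/

lemma mul_entTerm_div (a b : ℝ) : a * entTerm (b / a) = b * Real.logb 2 (a / b) := by
  rcases eq_or_ne a 0 with rfl | ha
  · simp
  · rw [entTerm, one_div_div, ← mul_assoc, mul_div_cancel₀ b ha]

lemma mul_logb_div_nonneg {x y : ℝ} (hx : 0 ≤ x) (hxy : x ≤ y) :
    0 ≤ x * Real.logb 2 (y / x) := by
  rcases hx.eq_or_lt with rfl | hx
  · simp
  · exact mul_nonneg hx.le (Real.logb_nonneg one_lt_two ((one_le_div hx).2 hxy))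

lemma mul_logb_div_pos {x y : ℝ} (hx : 0 < x) (hxy : x < y) : 0 < x * Real.logb 2 (y / x) :=
  mul_pos hx (Real.logb_pos one_lt_two ((one_lt_div hx).2 hxy))

lemma mul_logb_div_eq_add {x y z : ℝ} (hx : 0 ≤ x) (hxy : x ≤ y) (hxz : x ≤ z) :
    x * Real.logb 2 (z / x) = x * Real.logb 2 (y / x) + x * Real.logb 2 (z / y) := by
  rcases hx.eq_or_lt with rfl | hx
  · simp
  have hy := hx.trans_le hxy
  rw [← mul_add, ← Real.logb_mul (div_pos hy hx).ne' (div_pos (hx.trans_le hxz) hy).ne',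
    div_mul_div_cancel₀' hy.ne']

lemma Finset.sum_sum_ite_eq_sum {α β M : Type*} [Fintype α] [Fintype β] [DecidableEq β]
    [AddCommMonoid M] (f : α → β) (g : α → β → M) :
    ∑ b, ∑ a, (if f a = b then g a b else 0) = ∑ a, g a (f a) := by
  rw [Finset.sum_comm]
  simp

section ScaledEntropy

variable {α β : Type*} [Fintype α]

/-- `(∑ q) · 𝓗(q / ∑ q)`, chosen so that `condEntHL μ` is definitionally
`∑ ℓ, scaledEntropy (μ (·, ℓ))`, and `condEntHOL M μ` the analogous sum over the fibres of `M`. -/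
noncomputable def scaledEntropy (q : α → ℝ) : ℝ :=
  (∑ a, q a) * ∑ a, entTerm (q a / ∑ a', q a')

lemma apply_le_sum_of_nonneg {q : α → ℝ} (hq : 0 ≤ q) (a : α) : q a ≤ ∑ a', q a' :=
  Finset.single_le_sum (fun b _ => hq b) (Finset.mem_univ a)

lemma scaledEntropy_eq_sum (q : α → ℝ) :
    scaledEntropy q = ∑ a, q a * Real.logb 2 ((∑ a', q a') / q a) := by
  simp only [scaledEntropy, Finset.mul_sum, mul_entTerm_div]

lemma scaledEntropy_nonneg {q : α → ℝ} (hq : 0 ≤ q) : 0 ≤ scaledEntropy q := by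
  rw [scaledEntropy_eq_sum]
  exact Finset.sum_nonneg fun a _ => mul_logb_div_nonneg (hq a) (apply_le_sum_of_nonneg hq a)

lemma scaledEntropy_le_zero_iff {q : α → ℝ} (hq : 0 ≤ q) :
    scaledEntropy q ≤ 0 ↔ (Function.support q).Subsingleton := by
  rw [scaledEntropy_eq_sum]
  set P := ∑ a, q a
  constructor
  · intro hsum a ha b hb
    by_contra hab
    have hlt : q a < P := Finset.single_lt_sum (Ne.symm hab) (Finset.mem_univ a)
      (Finset.mem_univ b) ((hq b).lt_of_ne' hb) fun c _ _ => hq c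
    have : 0 < ∑ c, q c * Real.logb 2 (P / q c) :=
      Finset.sum_pos' (fun c _ => mul_logb_div_nonneg (hq c) (apply_le_sum_of_nonneg hq c))
        ⟨a, Finset.mem_univ a, mul_logb_div_pos ((hq a).lt_of_ne' ha) hlt⟩
    linarith
  · intro hs
    refine Finset.sum_nonpos fun a _ => ?_
    by_cases ha : q a = 0
    · simp [ha]
    · have hP : P = q a := Finset.sum_eq_single a
        (fun b _ hb => by_contra fun h => hb (hs h ha)) (by simp)
      simp [hP, div_self ha]

variable [Fintype β] [DecidableEq β]

/-- Chain rule `𝓗(X) = 𝓗(X | f X) + 𝓗(f X)`. -/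
theorem scaledEntropy_eq_sum_fiber_add (f : α → β) {q : α → ℝ} (hq : 0 ≤ q) :
    scaledEntropy q =
      ∑ b, scaledEntropy (fun a => if f a = b then q a else 0) +
        scaledEntropy (fun b => ∑ a, if f a = b then q a else 0) := by
  set r : β → ℝ := fun b => ∑ a, if f a = b then q a else 0
  set P := ∑ a, q a
  have hr : ∑ b, r b = P := Finset.sum_sum_ite_eq_sum f fun a _ => q a
  have hfiber : ∀ b, scaledEntropy (fun a => if f a = b then q a else 0) =
      ∑ a, if f a = b then q a * Real.logb 2 (r b / q a) else 0 := fun b => by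
    rw [scaledEntropy_eq_sum]
    exact Finset.sum_congr rfl fun a _ => by split_ifs <;> simp [r]
  have himage : scaledEntropy r = ∑ a, q a * Real.logb 2 (P / r (f a)) := by
    rw [scaledEntropy_eq_sum, hr,
      ← Finset.sum_sum_ite_eq_sum f fun a b => q a * Real.logb 2 (P / r b)]
    simp only [r, Finset.sum_mul, ite_mul, zero_mul]
  rw [scaledEntropy_eq_sum, Finset.sum_congr rfl fun b _ => hfiber b, Finset.sum_sum_ite_eq_sum,
    himage, ← Finset.sum_add_distrib]
  refine Finset.sum_congr rfl fun a _ =>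
    mul_logb_div_eq_add (hq a) ?_ (apply_le_sum_of_nonneg hq a)
  simpa using apply_le_sum_of_nonneg (fun a' => ite_nonneg (hq a') le_rfl) a
    (q := fun a' => if f a' = f a then q a' else 0)

end ScaledEntropy

lemma SE_eq_sum_scaledEntropy [Fintype Hi] [Fintype Li] [Fintype Oi] [DecidableEq Oi]
    (M : Hi × Li → Oi) {μ : Hi × Li → ℝ} (hμ : 0 ≤ μ) :
    SE M μ = ∑ ℓ, scaledEntropy (fun o => pOL M μ o ℓ) := by
  rw [SE, condEntHL, condEntHOL, ← Finset.sum_sub_distrib]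
  refine Finset.sum_congr rfl fun ℓ _ => ?_
  rw [sub_eq_iff_eq_add']
  exact scaledEntropy_eq_sum_fiber_add (fun h => M (h, ℓ)) fun h => hμ (h, ℓ)

lemma pOL_nonneg [Fintype Hi] [DecidableEq Oi] (M : Hi × Li → Oi) {μ : Hi × Li → ℝ}
    (hμ : 0 ≤ μ) (ℓ : Li) : 0 ≤ fun o => pOL M μ o ℓ := fun _ =>
  Finset.sum_nonneg fun h _ => ite_nonneg (hμ (h, ℓ)) le_rfl

lemma support_pOL [Fintype Hi] [DecidableEq Oi] (M : Hi × Li → Oi) {μ : Hi × Li → ℝ}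
    (hμ : ∀ x, 0 < μ x) (ℓ : Li) :
    Function.support (fun o => pOL M μ o ℓ) = Set.range fun h => M (h, ℓ) := by
  ext o
  rw [Function.mem_support, pOL, Ne,
    Finset.sum_eq_zero_iff_of_nonneg fun h _ => ite_nonneg (hμ (h, ℓ)).le le_rfl]
  simp [(hμ _).ne']

theorem noninterferent_iff_SE_le_zero
    [Fintype Hi] [Fintype Li] [Fintype Oi] [DecidableEq Oi]
    (M : Hi × Li → Oi) (μ : Hi × Li → ℝ)
    (hpos : ∀ x, 0 < μ x) :
    (∀ (h h' : Hi) (ℓ : Li), M (h, ℓ) = M (h', ℓ)) ↔ SE M μ ≤ 0 := by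
  have hμ : 0 ≤ μ := fun x => (hpos x).le
  rw [SE_eq_sum_scaledEntropy M hμ, ← not_lt,
    Finset.sum_pos_iff_of_nonneg fun ℓ _ => scaledEntropy_nonneg (pOL_nonneg M hμ ℓ)]
  simp only [Finset.mem_univ, true_and, not_exists, not_lt,
    scaledEntropy_le_zero_iff (pOL_nonneg M hμ _), support_pOL M hpos, Set.Subsingleton,
    Set.forall_mem_range]
  exact ⟨fun H ℓ h h' => H h h' ℓ, fun H h h' ℓ => H ℓ h h'⟩
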